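/- arXiv:1907.07658 — 2 statements merged into one kernel-verified Lean document; each statement's English description precedes it below -/
import Mathlib

section
/- Let G be connected of order at least 4 with sdiam_4(G) > (10/7)·srad_4(G), let D = {v_1,v_2,v_3,v_4} realize the Steiner 4-diameter, v_0 realize the Steiner 4-radius, and T_1 a Steiner tree of D_1 = (D\{v_1}) ∪ {v_0}. Then T_1 does not have exactly three leaves; combined with the path case, T_1 must have exactly four leaves, all belonging to D_1. -/
/-- The Steiner distance of a vertex set `S` in `G`: the minimum number of edges
of a connected subgraph of `G` containing all vertices of `S`. -/
noncomputable def steinerDist {V : Type*} [Fintype V] (G : SimpleGraph V) (S : Set V) : ℕ :=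
  sInf {n | ∃ H : G.Subgraph, H.Connected ∧ S ⊆ H.verts ∧ H.edgeSet.ncard = n}

/-- The Steiner `k`-eccentricity of a vertex `v`:
the maximum Steiner distance of a `k`-set containing `v`. -/
noncomputable def steinerEcc {V : Type*} [Fintype V] (G : SimpleGraph V) (k : ℕ) (v : V) : ℕ :=
  sSup {n | ∃ S : Finset V, v ∈ S ∧ S.card = k ∧ steinerDist G (S : Set V) = n}

/-- The Steiner `k`-radius of `G`. -/
noncomputable def srad {V : Type*} [Fintype V] (G : SimpleGraph V) (k : ℕ) : ℕ :=
  sInf (Set.range (steinerEcc G k))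

/-- The Steiner `k`-diameter of `G`. -/
noncomputable def sdiam {V : Type*} [Fintype V] (G : SimpleGraph V) (k : ℕ) : ℕ :=
  sSup (Set.range (steinerEcc G k))

/-- `H` is a Steiner tree for `S` in `G`: a connected acyclic subgraph containing `S`
whose number of edges equals the Steiner distance of `S`. -/
def IsSteinerTree {V : Type*} [Fintype V] (G : SimpleGraph V) (S : Set V) (H : G.Subgraph) :
    Prop :=
  H.Connected ∧ S ⊆ H.verts ∧ H.coe.IsAcyclic ∧ H.edgeSet.ncard = steinerDist G S

/-- The set of leaves (vertices of degree 1) of a subgraph. -/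
noncomputable def subLeaves {V : Type*} [Fintype V] {G : SimpleGraph V} (H : G.Subgraph) :
    Set V :=
  {v | v ∈ H.verts ∧ (H.neighborSet v).ncard = 1}

section SteinerAuxLemmas

open SimpleGraph

variable {W : Type*} {H : SimpleGraph W}

lemma geodesic_split (hc : H.Connected) {u v : W} (p : H.Walk u v)
    :
    p.length = H.dist u v → ∀ {e : Sym2 W}, e ∈ p.edges →
    ∃ x y, e = s(x, y) ∧ H.dist u x + (1 + H.dist y v) = H.dist u v := by
  induction p with
  | nil => intro _ e he; simp at he
  | @cons a b v h q ih =>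
    intro hp e he
    have hab : H.dist a b ≤ 1 := by
      simpa using SimpleGraph.dist_le (Walk.cons h Walk.nil)
    have htri : H.dist a v ≤ H.dist a b + H.dist b v := hc.dist_triangle
    have hqd : H.dist b v ≤ q.length := SimpleGraph.dist_le q
    have hlen : q.length + 1 = H.dist a v := by simpa using hp
    have hq : q.length = H.dist b v := by omega
    rw [Walk.edges_cons, List.mem_cons] at he
    rcases he with he | he
    · refine ⟨a, b, he ▸ rfl, ?_⟩
      rw [SimpleGraph.dist_self]; omega
    · obtain ⟨x, y, rfl, hd⟩ := ih hq he
      have hadj : H.Adj x y := q.adj_of_mem_edges he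
      have h1 : H.dist a x ≤ H.dist a b + H.dist b x := hc.dist_triangle
      have h2 : H.dist a v ≤ H.dist a x + H.dist x v := hc.dist_triangle
      have h3 : H.dist x v ≤ H.dist x y + H.dist y v := hc.dist_triangle
      have hxy1 : H.dist x y ≤ 1 := by
        simpa using SimpleGraph.dist_le (Walk.cons hadj Walk.nil)
      exact ⟨x, y, rfl, by omega⟩

lemma geodesic_side (hc : H.Connected) {u v x y : W} (hxy : H.Adj x y)
    (hsp : H.dist u x + (1 + H.dist y v) = H.dist u v) :
    H.dist u y = H.dist u x + 1 ∧ H.dist x v = H.dist y v + 1 := by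
  have hxy1 : H.dist x y ≤ 1 := by
    simpa using SimpleGraph.dist_le (Walk.cons hxy Walk.nil)
  have hyx1 : H.dist y x ≤ 1 := by
    simpa using SimpleGraph.dist_le (Walk.cons hxy.symm Walk.nil)
  have h1 : H.dist u y ≤ H.dist u x + H.dist x y := hc.dist_triangle
  have h2 : H.dist u v ≤ H.dist u y + H.dist y v := hc.dist_triangle
  have h3 : H.dist x v ≤ H.dist x y + H.dist y v := hc.dist_triangle
  have h4 : H.dist u v ≤ H.dist u x + H.dist x v := hc.dist_triangle
  omega

lemma not_mem_three_geodesics (hc : H.Connected) {i j k : W}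
    {pij : H.Walk i j} {pik : H.Walk i k} {pjk : H.Walk j k}
    (hij : pij.length = H.dist i j) (hik : pik.length = H.dist i k)
    (hjk : pjk.length = H.dist j k) {e : Sym2 W}
    (h1 : e ∈ pij.edges) (h2 : e ∈ pik.edges) (h3 : e ∈ pjk.edges) : False := by
  obtain ⟨x, y, rfl, hsp1⟩ := geodesic_split hc pij hij h1
  have hadj : H.Adj x y := pij.adj_of_mem_edges h1
  obtain ⟨hixy, hxjy⟩ := geodesic_side hc hadj hsp1
  obtain ⟨x', y', hxy', hsp2⟩ := geodesic_split hc pik hik h2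
  obtain ⟨x'', y'', hxy'', hsp3⟩ := geodesic_split hc pjk hjk h3
  rw [Sym2.eq_iff] at hxy' hxy''
  have c1 : H.dist x j = H.dist j x := SimpleGraph.dist_comm
  have c2 : H.dist y j = H.dist j y := SimpleGraph.dist_comm
  rcases hxy' with ⟨hx', hy'⟩ | ⟨hx', hy'⟩ <;> rcases hxy'' with ⟨hx'', hy''⟩ | ⟨hx'', hy''⟩ <;>
      subst hx' hy' hx'' hy''
  · obtain ⟨a1, a2⟩ := geodesic_side hc hadj hsp2
    obtain ⟨b1, b2⟩ := geodesic_side hc hadj hsp3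
    omega
  · obtain ⟨a1, a2⟩ := geodesic_side hc hadj hsp2
    obtain ⟨b1, b2⟩ := geodesic_side hc hadj.symm hsp3
    omega
  · obtain ⟨a1, a2⟩ := geodesic_side hc hadj.symm hsp2
    omega
  · obtain ⟨a1, a2⟩ := geodesic_side hc hadj.symm hsp2
    omega

lemma between_of_mem_support (hc : H.Connected) {u v : W} {p : H.Walk u v}
    (hp : p.length = H.dist u v) {z : W} (hz : z ∈ p.support) :
    H.dist u z + H.dist z v = H.dist u v := by
  classical
  have hspec := p.take_spec hz
  have hlen : (p.takeUntil z hz).length + (p.dropUntil z hz).length = p.length := by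
    rw [← Walk.length_append, hspec]
  have h1 : H.dist u z ≤ (p.takeUntil z hz).length := SimpleGraph.dist_le _
  have h2 : H.dist z v ≤ (p.dropUntil z hz).length := SimpleGraph.dist_le _
  have h3 : H.dist u v ≤ H.dist u z + H.dist z v := hc.dist_triangle
  omega

lemma path_ends_ne {u v : W} {p : H.Walk u v} (hp : p.IsPath) (hl : 0 < p.length) :
    u ≠ v := by
  intro huv
  subst huv
  rw [Walk.isPath_iff_eq_nil] at hp
  subst hp
  simp at hl

lemma acyclic_path_length (hc : H.Connected) (ha : H.IsAcyclic) {u v : W}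
    {p : H.Walk u v} (hp : p.IsPath) : p.length = H.dist u v := by
  obtain ⟨p', hp', hl'⟩ := hc.exists_path_of_dist u v
  have := ha.path_unique ⟨p, hp⟩ ⟨p', hp'⟩
  rw [Subtype.ext_iff] at this
  simp only at this
  rw [this, hl']

lemma exists_extension [Finite W] (ha : H.IsAcyclic) {u v : W} (p : H.Walk u v)
    (hp : p.IsPath) (hl : 0 < p.length) (hdeg : (H.neighborSet u).ncard ≠ 1) :
    ∃ y, H.Adj y u ∧ y ∉ p.support := by
  classical
  cases p with
  | nil => simp at hl
  | @cons u b v h q =>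
    have hb : b ∈ H.neighborSet u := h
    have hpos : 0 < (H.neighborSet u).ncard := by
      rw [Set.ncard_pos (Set.toFinite _)]
      exact ⟨b, hb⟩
    have h2 : 1 < (H.neighborSet u).ncard := by omega
    rw [Set.one_lt_ncard (Set.toFinite _)] at h2
    obtain ⟨n1, hn1, n2, hn2, hne⟩ := h2
    -- pick y ∈ neighborSet u with y ≠ b
    obtain ⟨y, hy, hyb⟩ : ∃ y ∈ H.neighborSet u, y ≠ b := by
      rcases eq_or_ne n1 b with rfl | h'
      · exact ⟨n2, hn2, fun hh => hne hh.symm⟩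
      · exact ⟨n1, hn1, h'⟩
    refine ⟨y, hy.symm, ?_⟩
    intro hmem
    have hyu : y ≠ u := (H.ne_of_adj hy).symm
    rw [Walk.support_cons, List.mem_cons] at hmem
    rcases hmem with rfl | hyq
    · exact hyu rfl
    rw [Walk.cons_isPath_iff] at hp
    have hq' : (q.takeUntil y hyq).IsPath := hp.1.takeUntil hyq
    have hu : u ∉ (q.takeUntil y hyq).support :=
      fun hh => hp.2 (q.support_takeUntil_subset hyq hh)
    have hP1 : (Walk.cons h (q.takeUntil y hyq)).IsPath := by
      rw [Walk.cons_isPath_iff]; exact ⟨hq', hu⟩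
    have := ha.path_unique ⟨Walk.cons h (q.takeUntil y hyq), hP1⟩ (SimpleGraph.Path.singleton hy)
    rw [Subtype.ext_iff] at this
    simp only [SimpleGraph.Path.singleton] at this
    injection this with h1 h2 h3
    exact hyb h2.symm

lemma edge_between_leaves [Fintype W] (hc : H.Connected) (ha : H.IsAcyclic)
    {e : Sym2 W} (he : e ∈ H.edgeSet) :
    ∃ (l1 l2 : W) (p : H.Walk l1 l2), p.IsPath ∧ e ∈ p.edges ∧
      (H.neighborSet l1).ncard = 1 ∧ (H.neighborSet l2).ncard = 1 ∧ l1 ≠ l2 := by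
  classical
  have key : ∀ n (l1 l2 : W) (p : H.Walk l1 l2), Fintype.card W - p.length ≤ n →
      p.IsPath → e ∈ p.edges → ∃ (l1 l2 : W) (p : H.Walk l1 l2), p.IsPath ∧ e ∈ p.edges ∧
      (H.neighborSet l1).ncard = 1 ∧ (H.neighborSet l2).ncard = 1 ∧ l1 ≠ l2 := by
    intro n
    induction n with
    | zero =>
      intro l1 l2 p hn hp he
      have := hp.length_lt
      omega
    | succ n ih =>
      intro l1 l2 p hn hp hpe
      have hlen : 0 < p.length := by
        rcases p with _ | _
        · simp at hpe
        · simp [Walk.length_cons]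
      by_cases hd1 : (H.neighborSet l1).ncard = 1
      · by_cases hd2 : (H.neighborSet l2).ncard = 1
        · exact ⟨l1, l2, p, hp, hpe, hd1, hd2, path_ends_ne hp hlen⟩
        · -- extend at l2 using the reversed walk
          obtain ⟨y, hadj, hys⟩ := exists_extension ha p.reverse hp.reverse
            (by simpa using hlen) hd2
          have hp' : (Walk.cons hadj p.reverse).IsPath := by
            rw [Walk.cons_isPath_iff]; exact ⟨hp.reverse, hys⟩
          refine ih y l1 (Walk.cons hadj p.reverse) ?_ hp' ?_
          · have h1 := hp'.length_lt
            simp only [Walk.length_cons, Walk.length_reverse] at h1 ⊢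
            omega
          · rw [Walk.edges_cons, List.mem_cons]
            right
            rw [Walk.edges_reverse, List.mem_reverse]
            exact hpe
      · obtain ⟨y, hadj, hys⟩ := exists_extension ha p hp hlen hd1
        have hp' : (Walk.cons hadj p).IsPath := by
          rw [Walk.cons_isPath_iff]; exact ⟨hp, hys⟩
        refine ih y l2 (Walk.cons hadj p) ?_ hp' ?_
        · have h1 := hp'.length_lt
          simp only [Walk.length_cons] at h1 ⊢
          omega
        · rw [Walk.edges_cons, List.mem_cons]; right; exact hpe
  induction e with
  | _ x y =>
    have hadj : H.Adj x y := he
    refine key (Fintype.card W) x y (Walk.cons hadj Walk.nil) (by omega)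
      (SimpleGraph.Path.singleton hadj).2 ?_
    simp

lemma pivot (hc : H.Connected) (ha : H.IsAcyclic) {x y z t : W}
    (hb : H.dist x t + H.dist t y = H.dist x y) (htx : t ≠ x) :
    (H.dist x t + H.dist t z = H.dist x z) ∨ (H.dist z t + H.dist t y = H.dist z y) := by
  classical
  obtain ⟨pxt, hpxt, hlxt⟩ := hc.exists_path_of_dist x t
  obtain ⟨pty, hpty, hlty⟩ := hc.exists_path_of_dist t y
  obtain ⟨pxz, hpxz, hlxz⟩ := hc.exists_path_of_dist x z
  obtain ⟨pzy, hpzy, hlzy⟩ := hc.exists_path_of_dist z y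
  set q : H.Walk x y := pxt.append pty with hq
  have hqlen : q.length = H.dist x y := by
    rw [hq, Walk.length_append, hlxt, hlty, hb]
  have hqpath : q.IsPath := q.isPath_of_length_eq_dist hqlen
  -- find an edge of q incident to t
  obtain ⟨w, hadj, r', hr'⟩ := Walk.exists_eq_cons_of_ne htx pxt.reverse
  have hew : s(t, w) ∈ pxt.edges := by
    have : s(t, w) ∈ pxt.reverse.edges := by rw [hr']; simp
    rwa [Walk.edges_reverse, List.mem_reverse] at this
  have hewq : s(t, w) ∈ q.edges := by
    rw [hq, Walk.edges_append, List.mem_append]; left; exact hew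
  -- q equals the bypass of the concatenation through z
  set w2 : H.Walk x y := pxz.append pzy with hw2
  have hqeq : q = w2.bypass := by
    have := ha.path_unique ⟨q, hqpath⟩ ⟨w2.bypass, w2.bypass_isPath⟩
    rwa [Subtype.ext_iff] at this
  have : s(t, w) ∈ w2.edges := by
    apply Walk.edges_bypass_subset
    rw [← hqeq]; exact hewq
  rw [hw2, Walk.edges_append, List.mem_append] at this
  rcases this with h' | h'
  · left
    exact between_of_mem_support hc hlxz (pxz.fst_mem_support_of_mem_edges h')
  · right
    exact between_of_mem_support hc hlzy (pzy.fst_mem_support_of_mem_edges h')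

lemma final_count [Fintype W] (hc : H.Connected) {β : ℝ} {i j k t : W}
    (h1 : H.dist i t + H.dist t j = H.dist i j)
    (h2 : H.dist i t + H.dist t k = H.dist i k)
    (hti : β < (H.dist t i : ℝ)) (htj : β < (H.dist t j : ℝ))
    (htk : β < (H.dist t k : ℝ)) (hjk : β < (H.dist j k : ℝ))
    (hm : (H.edgeSet.ncard : ℝ) < 7 / 3 * β) : False := by
  classical
  obtain ⟨pij, hpij, hlij⟩ := hc.exists_path_of_dist i j
  obtain ⟨pik, hpik, hlik⟩ := hc.exists_path_of_dist i k
  obtain ⟨pjk, hpjk, hljk⟩ := hc.exists_path_of_dist j k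
  set E1 := pij.edges.toFinset with hE1
  set E2 := pik.edges.toFinset with hE2
  set E3 := pjk.edges.toFinset with hE3
  have hc1 : E1.card = H.dist i j := by
    rw [hE1, List.toFinset_card_of_nodup hpij.edges_nodup, Walk.length_edges, hlij]
  have hc2 : E2.card = H.dist i k := by
    rw [hE2, List.toFinset_card_of_nodup hpik.edges_nodup, Walk.length_edges, hlik]
  have hc3 : E3.card = H.dist j k := by
    rw [hE3, List.toFinset_card_of_nodup hpjk.edges_nodup, Walk.length_edges, hljk]
  set U := E1 ∪ E2 ∪ E3 with hU
  have hUsub : (U : Set (Sym2 W)) ⊆ H.edgeSet := by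
    intro e he
    simp only [hU, Finset.coe_union, Set.mem_union, Finset.mem_coe, hE1, hE2, hE3,
      List.mem_toFinset] at he
    rcases he with (he | he) | he
    · exact pij.edges_subset_edgeSet he
    · exact pik.edges_subset_edgeSet he
    · exact pjk.edges_subset_edgeSet he
  have hUcard : U.card ≤ H.edgeSet.ncard := by
    rw [← Set.ncard_coe_finset]
    exact Set.ncard_le_ncard hUsub (Set.toFinite _)
  have htriple : ∀ e ∈ U, ¬(e ∈ E1 ∧ e ∈ E2 ∧ e ∈ E3) := by
    rintro e _ ⟨m1, m2, m3⟩
    simp only [hE1, hE2, hE3, List.mem_toFinset] at m1 m2 m3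
    exact not_mem_three_geodesics hc hlij hlik hljk m1 m2 m3
  have hsum : E1.card + E2.card + E3.card ≤ 2 * U.card := by
    have hfilter : ∀ E : Finset (Sym2 W), E ⊆ U →
        E.card = ∑ e ∈ U, (if e ∈ E then 1 else 0) := by
      intro E hEU
      rw [Finset.sum_ite_mem, Finset.inter_eq_right.mpr hEU, Finset.sum_const, smul_eq_mul,
        mul_one]
    rw [hfilter E1 (by intro e he; simp [hU, he]), hfilter E2 (by intro e he; simp [hU, he]),
      hfilter E3 (by intro e he; simp [hU, he]), ← Finset.sum_add_distrib,
      ← Finset.sum_add_distrib]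
    calc ∑ e ∈ U, ((if e ∈ E1 then 1 else 0) + (if e ∈ E2 then 1 else 0)
          + (if e ∈ E3 then 1 else 0))
        ≤ ∑ _e ∈ U, 2 := by
          apply Finset.sum_le_sum
          intro e he
          have := htriple e he
          by_cases m1 : e ∈ E1 <;> by_cases m2 : e ∈ E2 <;> by_cases m3 : e ∈ E3 <;>
            simp [m1, m2, m3] at this ⊢
      _ = 2 * U.card := by rw [Finset.sum_const, smul_eq_mul, mul_comm]
  have hkey : H.dist i j + H.dist i k + H.dist j k ≤ 2 * H.edgeSet.ncard := by
    rw [← hc1, ← hc2, ← hc3]; omega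
  have hcomm1 : H.dist i t = H.dist t i := SimpleGraph.dist_comm
  rw [← h1, ← h2, hcomm1] at hkey
  have hcast : ((2 : ℕ) * H.edgeSet.ncard : ℝ) = 2 * (H.edgeSet.ncard : ℝ) := by push_cast; ring
  have hr : (H.dist t i : ℝ) + (H.dist t j : ℝ) + ((H.dist t i : ℝ) + (H.dist t k : ℝ))
      + (H.dist j k : ℝ) ≤ 2 * (H.edgeSet.ncard : ℝ) := by
    rw [← hcast]
    exact_mod_cast Nat.cast_le.mpr hkey
  linarith

lemma main_count [Fintype W] (hc : H.Connected) (ha : H.IsAcyclic) {β : ℝ}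
    {a b c t : W} (hab : a ≠ b) (hac : a ≠ c) (hbc : b ≠ c)
    (hta : t ≠ a) (htb : t ≠ b) (htc : t ≠ c)
    (hd : ∀ x y : W, x ∈ ({a, b, c, t} : Set W) → y ∈ ({a, b, c, t} : Set W) → x ≠ y →
      β < (H.dist x y : ℝ))
    (hleaf : ∀ v : W, (H.neighborSet v).ncard = 1 → v ∈ ({a, b, c} : Set W))
    (hm : (H.edgeSet.ncard : ℝ) < 7 / 3 * β) : False := by
  classical
  have htne : ∀ x, x ∈ ({a, b, c} : Set W) → t ≠ x := by
    rintro x (rfl | rfl | rfl)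
    exacts [hta, htb, htc]
  have hsub : ({a, b, c} : Set W) ⊆ ({a, b, c, t} : Set W) := by
    intro x hx
    simp only [Set.mem_insert_iff, Set.mem_singleton_iff] at hx ⊢
    tauto
  have htmem : t ∈ ({a, b, c, t} : Set W) := by simp
  -- find an edge incident to t
  obtain ⟨p0⟩ := hc.preconnected t a
  obtain ⟨w0, hadj0, p0', _⟩ := Walk.exists_eq_cons_of_ne hta p0
  -- it lies on a path between two leaves
  obtain ⟨l1, l2, q, hq, hqe, hleaf1, hleaf2, hne12⟩ := edge_between_leaves hc ha (e := s(t, w0)) hadj0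
  have hl1 : l1 ∈ ({a, b, c} : Set W) := hleaf l1 hleaf1
  have hl2 : l2 ∈ ({a, b, c} : Set W) := hleaf l2 hleaf2
  have hql : q.length = H.dist l1 l2 := acyclic_path_length hc ha hq
  have hts : t ∈ q.support := q.fst_mem_support_of_mem_edges hqe
  have hbtw : H.dist l1 t + H.dist t l2 = H.dist l1 l2 :=
    between_of_mem_support hc hql hts
  -- pick the third vertex z
  obtain ⟨z, hz, hz1, hz2⟩ : ∃ z ∈ ({a, b, c} : Set W), z ≠ l1 ∧ z ≠ l2 := by
    have h1 : l1 = a ∨ l1 = b ∨ l1 = c := by simpa using hl1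
    have h2 : l2 = a ∨ l2 = b ∨ l2 = c := by simpa using hl2
    rcases h1 with h1 | h1 | h1 <;> rcases h2 with h2 | h2 | h2 <;>
      first
      | exact absurd (h1.trans h2.symm) hne12
      | exact ⟨c, by simp, by rw [h1]; exact Ne.symm hac, by rw [h2]; exact Ne.symm hbc⟩
      | exact ⟨c, by simp, by rw [h1]; exact Ne.symm hbc, by rw [h2]; exact Ne.symm hac⟩
      | exact ⟨b, by simp, by rw [h1]; exact Ne.symm hab, by rw [h2]; exact hbc⟩
      | exact ⟨b, by simp, by rw [h1]; exact hbc, by rw [h2]; exact Ne.symm hab⟩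
      | exact ⟨a, by simp, by rw [h1]; exact hab, by rw [h2]; exact hac⟩
      | exact ⟨a, by simp, by rw [h1]; exact hac, by rw [h2]; exact hab⟩
  rcases pivot hc ha hbtw (htne l1 hl1) with hpiv | hpiv
  · -- i = l1, j = l2, k = z
    refine final_count hc (i := l1) (j := l2) (k := z) (t := t) hbtw hpiv
      (hd t l1 htmem (hsub hl1) (htne l1 hl1))
      (hd t l2 htmem (hsub hl2) (htne l2 hl2))
      (hd t z htmem (hsub hz) (htne z hz))
      (hd l2 z (hsub hl2) (hsub hz) (Ne.symm hz2)) hm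
  · -- i = l2, j = l1, k = z
    have e1 : H.dist l2 t + H.dist t l1 = H.dist l2 l1 := by
      have c1 : H.dist l2 t = H.dist t l2 := SimpleGraph.dist_comm
      have c2 : H.dist t l1 = H.dist l1 t := SimpleGraph.dist_comm
      have c3 : H.dist l2 l1 = H.dist l1 l2 := SimpleGraph.dist_comm
      omega
    have e2 : H.dist l2 t + H.dist t z = H.dist l2 z := by
      have c1 : H.dist l2 t = H.dist t l2 := SimpleGraph.dist_comm
      have c2 : H.dist t z = H.dist z t := SimpleGraph.dist_comm
      have c3 : H.dist l2 z = H.dist z l2 := SimpleGraph.dist_comm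
      omega
    refine final_count hc (i := l2) (j := l1) (k := z) (t := t) e1 e2
      (hd t l2 htmem (hsub hl2) (htne l2 hl2))
      (hd t l1 htmem (hsub hl1) (htne l1 hl1))
      (hd t z htmem (hsub hz) (htne z hz))
      (hd l1 z (hsub hl1) (hsub hz) (Ne.symm hz1)) hm

namespace SteinerLemmas

variable {V : Type*} [Fintype V] {G : SimpleGraph V}

lemma top_connected (hG : G.Connected) : (⊤ : G.Subgraph).Connected := by
  rw [SimpleGraph.Subgraph.connected_iff']
  rw [SimpleGraph.Subgraph.topIso.connected_iff]
  exact hG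

lemma steiner_nonempty (hG : G.Connected) (S : Set V) :
    {n | ∃ H : G.Subgraph, H.Connected ∧ S ⊆ H.verts ∧ H.edgeSet.ncard = n}.Nonempty :=
  ⟨(⊤ : G.Subgraph).edgeSet.ncard, ⊤, top_connected hG, by simp, rfl⟩

lemma steinerDist_le_witness {S : Set V} {H : G.Subgraph} (h1 : H.Connected)
    (h2 : S ⊆ H.verts) : steinerDist G S ≤ H.edgeSet.ncard :=
  Nat.sInf_le ⟨H, h1, h2, rfl⟩

lemma exists_steiner_witness (hG : G.Connected) (S : Set V) :
    ∃ H : G.Subgraph, H.Connected ∧ S ⊆ H.verts ∧ H.edgeSet.ncard = steinerDist G S :=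
  Nat.sInf_mem (steiner_nonempty hG S)

lemma steinerDist_mono (hG : G.Connected) {S S' : Set V} (h : S ⊆ S') :
    steinerDist G S ≤ steinerDist G S' := by
  obtain ⟨H, h1, h2, h3⟩ := exists_steiner_witness hG S'
  rw [← h3]
  exact steinerDist_le_witness h1 (h.trans h2)

lemma ecc_bddAbove (hG : G.Connected) (k : ℕ) (v : V) :
    BddAbove {n | ∃ S : Finset V, v ∈ S ∧ S.card = k ∧ steinerDist G (S : Set V) = n} := by
  refine ⟨(⊤ : G.Subgraph).edgeSet.ncard, ?_⟩
  rintro n ⟨S, _, _, rfl⟩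
  exact steinerDist_le_witness (top_connected hG) (by simp)

lemma le_steinerEcc (hG : G.Connected) {k : ℕ} {v : V} {S : Finset V} (hv : v ∈ S)
    (hc : S.card = k) : steinerDist G (S : Set V) ≤ steinerEcc G k v :=
  le_csSup (ecc_bddAbove hG k v) ⟨S, hv, hc, rfl⟩

lemma steinerEcc_le_bound (hG : G.Connected) (k : ℕ) (v : V) :
    steinerEcc G k v ≤ (⊤ : G.Subgraph).edgeSet.ncard := by
  rcases Set.eq_empty_or_nonempty
      {n | ∃ S : Finset V, v ∈ S ∧ S.card = k ∧ steinerDist G (S : Set V) = n} with h | h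
  · rw [steinerEcc, h, csSup_empty]
    exact Nat.zero_le _
  · refine csSup_le h ?_
    rintro n ⟨S, _, _, rfl⟩
    exact SteinerLemmas.steinerDist_le_witness (top_connected hG) (by simp)

lemma steinerEcc_le_sdiam (hG : G.Connected) (k : ℕ) (v : V) :
    steinerEcc G k v ≤ sdiam G k := by
  refine le_csSup ⟨(⊤ : G.Subgraph).edgeSet.ncard, ?_⟩ (Set.mem_range_self v)
  rintro n ⟨u, rfl⟩
  exact steinerEcc_le_bound hG k u

lemma srad_le_steinerEcc (k : ℕ) (v : V) : srad G k ≤ steinerEcc G k v :=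
  Nat.sInf_le (Set.mem_range_self v)

lemma steinerDist_le_srad (hG : G.Connected) (hcard : 4 ≤ Fintype.card V) {v : V}
    {S : Finset V} (hv : v ∈ S) (hS : S.card ≤ 4)
    (hvecc : steinerEcc G 4 v = srad G 4) : steinerDist G (S : Set V) ≤ srad G 4 := by
  obtain ⟨T, hST, -, hT⟩ := Finset.exists_subsuperset_card_eq (Finset.subset_univ S)
    hS (by simpa using hcard)
  calc steinerDist G (S : Set V) ≤ steinerDist G (T : Set V) :=
        steinerDist_mono hG (by exact_mod_cast hST)
    _ ≤ steinerEcc G 4 v := le_steinerEcc hG (hST hv) hT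
    _ = srad G 4 := hvecc

lemma walk_transfer {T : G.Subgraph} {L : Set V} {x' y' : T.verts}
    (p : T.coe.Walk x' y') (hsup : ∀ z ∈ p.support, (z : V) ∉ L)
    (hx : (x' : V) ∈ (T.deleteVerts L).verts) (hy : (y' : V) ∈ (T.deleteVerts L).verts) :
    ((T.deleteVerts L).coe).Reachable ⟨x', hx⟩ ⟨y', hy⟩ := by
  induction p with
  | nil => rfl
  | @cons a b c h q ih =>
    have hb : (b : V) ∈ (T.deleteVerts L).verts := by
      rw [SimpleGraph.Subgraph.deleteVerts_verts]
      exact ⟨b.2, hsup b (by simp)⟩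
    have hadj : ((T.deleteVerts L).coe).Adj ⟨a, hx⟩ ⟨b, hb⟩ := by
      show (T.deleteVerts L).Adj a b
      rw [SimpleGraph.Subgraph.deleteVerts_adj]
      exact ⟨a.2, hsup a (by simp), b.2, hsup b (by simp), h⟩
    exact (SimpleGraph.Adj.reachable hadj).trans (ih (fun z hz => hsup z (by simp [hz])) hb hy)

lemma leaves_subset_terminals {S : Set V} {T : G.Subgraph}
    (hT : IsSteinerTree G S T) (hS : S.Nonempty) : subLeaves T ⊆ S := by
  classical
  rintro ℓ ⟨hℓv, hℓ1⟩
  by_contra hℓS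
  obtain ⟨nb, hnb⟩ : (T.neighborSet ℓ).Nonempty := by
    rw [← Set.ncard_pos (Set.toFinite _)]
    omega
  set T' := T.deleteVerts {ℓ} with hT'
  have hSsub : S ⊆ T'.verts := by
    intro x hx
    rw [hT', SimpleGraph.Subgraph.deleteVerts_verts]
    exact ⟨hT.2.1 hx, by simp; rintro rfl; exact hℓS hx⟩
  have hconn : T'.Connected := by
    rw [SimpleGraph.Subgraph.connected_iff]
    constructor
    · constructor
      rintro ⟨x, hx⟩ ⟨y, hy⟩
      have hx' : x ∈ T.verts := (SimpleGraph.Subgraph.deleteVerts_verts ▸ hx).1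
      have hy' : y ∈ T.verts := (SimpleGraph.Subgraph.deleteVerts_verts ▸ hy).1
      obtain ⟨w⟩ := hT.1.coe ⟨x, hx'⟩ ⟨y, hy'⟩
      set p := w.bypass with hp
      have hpp : p.IsPath := w.bypass_isPath
      have hsup : ∀ z ∈ p.support, (z : V) ∉ ({ℓ} : Set V) := by
        intro z hz hzℓ
        rw [Set.mem_singleton_iff] at hzℓ
        have hxℓ : x ≠ ℓ := by
          have := (SimpleGraph.Subgraph.deleteVerts_verts ▸ hx).2
          simpa using this
        have hyℓ : y ≠ ℓ := by
          have := (SimpleGraph.Subgraph.deleteVerts_verts ▸ hy).2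
          simpa using this
        have hzx : z ≠ ⟨x, hx'⟩ := by
          intro h
          exact hxℓ (by rw [← hzℓ, h])
        have hzy : z ≠ ⟨y, hy'⟩ := by
          intro h
          exact hyℓ (by rw [← hzℓ, h])
        have hspec := p.take_spec hz
        set q := p.takeUntil z hz with hqdef
        set r := p.dropUntil z hz with hrdef
        obtain ⟨n1, hn1adj, q1, hq1⟩ := SimpleGraph.Walk.exists_eq_cons_of_ne hzx q.reverse
        obtain ⟨n2, hn2adj, r1, hr1⟩ := SimpleGraph.Walk.exists_eq_cons_of_ne hzy r
        have hn1q : n1 ∈ q.support := by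
          have : n1 ∈ q.reverse.support := by rw [hq1]; simp
          rwa [SimpleGraph.Walk.support_reverse, List.mem_reverse] at this
        have hn2r : n2 ∈ r.support.tail := by
          rw [hr1]; simp
        have hnd : p.support.Nodup := hpp.support_nodup
        have hsupeq : p.support = q.support ++ r.support.tail := by
          rw [← hspec, SimpleGraph.Walk.support_append]
        rw [hsupeq] at hnd
        have hdisj := List.disjoint_of_nodup_append hnd
        have hne12 : n1 ≠ n2 := fun h => hdisj hn1q (h ▸ hn2r)
        have hadj1 : T.Adj ℓ ↑n1 := hzℓ ▸ hn1adj
        have hadj2 : T.Adj ℓ ↑n2 := hzℓ ▸ hn2adj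
        have h2n : 1 < (T.neighborSet ℓ).ncard := by
          rw [Set.one_lt_ncard (Set.toFinite _)]
          exact ⟨n1, hadj1, n2, hadj2, fun h => hne12 (Subtype.ext h)⟩
        omega
      exact walk_transfer p hsup hx hy
    · exact hS.imp (fun x hx => hSsub hx)
  -- the deleted subgraph has strictly fewer edges
  have hedge : T'.edgeSet ⊆ T.edgeSet \ {s(ℓ, nb)} := by
    intro e he
    induction e with
    | _ u v =>
      rw [SimpleGraph.Subgraph.mem_edgeSet] at he
      rw [hT', SimpleGraph.Subgraph.deleteVerts_adj] at he
      constructor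
      · exact he.2.2.2.2
      · simp only [Set.mem_singleton_iff, Sym2.eq_iff]
        rintro (⟨rfl, rfl⟩ | ⟨rfl, rfl⟩)
        · exact he.2.1 rfl
        · exact he.2.2.2.1 rfl
  have hlt : T'.edgeSet.ncard < T.edgeSet.ncard := by
    calc T'.edgeSet.ncard ≤ (T.edgeSet \ {s(ℓ, nb)}).ncard :=
          Set.ncard_le_ncard hedge (Set.toFinite _)
      _ < T.edgeSet.ncard := Set.ncard_diff_singleton_lt_of_mem hnb (Set.toFinite _)
  have := steinerDist_le_witness hconn hSsub
  rw [hT.2.2.2] at hlt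
  omega

end SteinerLemmas


end SteinerAuxLemmas

set_option maxHeartbeats 1000000 in
theorem T1_four_leaves {V : Type*} [Fintype V] (G : SimpleGraph V)
    (hG : G.Connected) (hcard : 4 ≤ Fintype.card V)
    (hps : (sdiam G 4 : ℝ) > 10 / 7 * srad G 4)
    (vs : Fin 4 → V) (hinj : Function.Injective vs)
    (hD : steinerDist G (Set.range vs) = sdiam G 4)
    (v₀ : V) (hv₀ : steinerEcc G 4 v₀ = srad G 4)
    (T1 : G.Subgraph) (hT1 : IsSteinerTree G ((Set.range vs \ {vs 0}) ∪ {v₀}) T1) :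
    (subLeaves T1).ncard ≠ 3 ∧ (subLeaves T1).ncard = 4 ∧
      subLeaves T1 ⊆ (Set.range vs \ {vs 0}) ∪ {v₀} := by
  classical
  set D1 : Set V := (Set.range vs \ {vs 0}) ∪ {v₀} with hD1def
  obtain ⟨hT1conn, hT1sub, hT1acy, hT1card⟩ := hT1
  have hsr : (srad G 4 : ℝ) < 7 / 10 * (sdiam G 4 : ℝ) := by linarith
  have hv0r : v₀ ∉ Set.range vs := by
    rintro ⟨i, rfl⟩
    have hfin : (Finset.image vs Finset.univ).card = 4 := by
      rw [Finset.card_image_of_injective _ hinj]; simp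
    have hco : ((Finset.image vs Finset.univ : Finset V) : Set V) = Set.range vs := by
      simp [Finset.coe_image]
    have h1 : steinerDist G (Set.range vs) ≤ steinerEcc G 4 (vs i) := by
      rw [← hco]
      exact SteinerLemmas.le_steinerEcc hG (Finset.mem_image_of_mem vs (Finset.mem_univ i)) hfin
    rw [hD, hv₀] at h1
    have h2 : (sdiam G 4 : ℝ) ≤ (srad G 4 : ℝ) := by exact_mod_cast h1
    have h0 : (0:ℝ) ≤ (srad G 4 : ℝ) := Nat.cast_nonneg _
    linarith
  have hvne : ∀ i j : Fin 4, i ≠ j → vs i ≠ vs j := fun i j hij h => hij (hinj h)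
  have hv0i : ∀ i : Fin 4, v₀ ≠ vs i := fun i h => hv0r ⟨i, h.symm⟩
  set D1f : Finset V := {vs 1, vs 2, vs 3, v₀} with hD1f
  have hcoeD1 : (D1f : Set V) = D1 := by
    rw [hD1f, hD1def]
    ext x
    simp only [Finset.coe_insert, Finset.coe_singleton, Set.mem_insert_iff,
      Set.mem_singleton_iff, Set.mem_union, Set.mem_diff, Set.mem_range]
    constructor
    · rintro (rfl | rfl | rfl | rfl)
      · exact Or.inl ⟨⟨1, rfl⟩, hvne 1 0 (by decide)⟩
      · exact Or.inl ⟨⟨2, rfl⟩, hvne 2 0 (by decide)⟩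
      · exact Or.inl ⟨⟨3, rfl⟩, hvne 3 0 (by decide)⟩
      · exact Or.inr rfl
    · rintro (⟨⟨i, rfl⟩, hne0⟩ | rfl)
      · fin_cases i
        · exact absurd rfl hne0
        · tauto
        · tauto
        · tauto
      · tauto
  have hcard4 : D1f.card = 4 := by
    rw [hD1f]
    rw [Finset.card_insert_of_notMem (by
      simp only [Finset.mem_insert, Finset.mem_singleton]
      push_neg
      exact ⟨hvne 1 2 (by decide), hvne 1 3 (by decide), fun h => hv0i 1 h.symm⟩)]
    rw [Finset.card_insert_of_notMem (by
      simp only [Finset.mem_insert, Finset.mem_singleton]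
      push_neg
      exact ⟨hvne 2 3 (by decide), fun h => hv0i 2 h.symm⟩)]
    rw [Finset.card_insert_of_notMem (by
      simp only [Finset.mem_singleton]
      exact fun h => hv0i 3 h.symm)]
    simp
  have hmemD1 : ∀ x, x ∈ D1 ↔ (x = vs 1 ∨ x = vs 2 ∨ x = vs 3 ∨ x = v₀) := by
    intro x
    rw [← hcoeD1]
    simp [hD1f]
  have hv₀D1 : v₀ ∈ D1 := (hmemD1 v₀).mpr (by tauto)
  have hv₀D1f : v₀ ∈ D1f := by rw [hD1f]; simp
  -- the number of edges of T1
  have hmle : steinerDist G D1 ≤ srad G 4 := by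
    rw [← hcoeD1]
    exact SteinerLemmas.steinerDist_le_srad hG hcard hv₀D1f (le_of_eq hcard4) hv₀
  have hmcast : (T1.edgeSet.ncard : ℝ) < 7 / 10 * (sdiam G 4 : ℝ) := by
    rw [hT1card]
    have : (steinerDist G D1 : ℝ) ≤ (srad G 4 : ℝ) := by exact_mod_cast hmle
    linarith
  -- subtype graph
  haveI : Fintype ↥T1.verts := Fintype.ofFinite _
  have hc : T1.coe.Connected := hT1conn.coe
  -- edge count transfer
  have himg : T1.edgeSet = Sym2.map (Subtype.val) '' T1.coe.edgeSet := by
    ext e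
    induction e with
    | _ u v =>
      simp only [Set.mem_image]
      constructor
      · intro h
        have h' : T1.Adj u v := h
        exact ⟨s(⟨u, h'.fst_mem⟩, ⟨v, h'.snd_mem⟩), h', by rw [Sym2.map_pair_eq]⟩
      · rintro ⟨e', he', heq⟩
        induction e' with
        | _ a b =>
          rw [Sym2.map_pair_eq] at heq
          rw [← heq]
          exact he'
  have hncard : T1.coe.edgeSet.ncard = T1.edgeSet.ncard := by
    rw [himg, Set.ncard_image_of_injective _ (Sym2.map.injective Subtype.val_injective)]
  -- neighbour set transfer
  have hnbr : ∀ v : ↥T1.verts, T1.neighborSet ↑v = Subtype.val '' T1.coe.neighborSet v := by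
    intro v
    ext w
    constructor
    · intro hw
      have hadj : T1.Adj ↑v w := hw
      exact ⟨⟨w, hadj.snd_mem⟩, hadj, rfl⟩
    · rintro ⟨w', hw', rfl⟩
      exact hw'
  have hleaftrans : ∀ v : ↥T1.verts, (T1.coe.neighborSet v).ncard = 1 →
      (v : V) ∈ subLeaves T1 := by
    intro v h
    refine ⟨v.2, ?_⟩
    rw [hnbr v, Set.ncard_image_of_injective _ Subtype.val_injective, h]
  -- the key distance estimate
  have hkey : ∀ (x y : ↥T1.verts), (x : V) ∈ D1 → (y : V) ∈ D1 → (y : V) ≠ v₀ → x ≠ y →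
      3 / 10 * (sdiam G 4 : ℝ) < (T1.coe.dist x y : ℝ) := by
    intro x y hx hy hyv0 hxy
    by_contra hle
    push_neg at hle
    obtain ⟨p, hpp, hpl⟩ := hc.exists_path_of_dist x y
    set q := p.map T1.hom with hq
    have hql : q.length = T1.coe.dist x y := by rw [hq, SimpleGraph.Walk.length_map, hpl]
    have hKcard : q.toSubgraph.edgeSet.ncard ≤ T1.coe.dist x y := by
      rw [SimpleGraph.Walk.edgeSet_toSubgraph]
      have h1 : {e | e ∈ q.edges} = (q.edges.toFinset : Set (Sym2 V)) := by ext e; simp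
      rw [← SimpleGraph.Walk.coe_edges_toFinset, Set.ncard_coe_finset]
      calc q.edges.toFinset.card ≤ q.edges.length := q.edges.toFinset_card_le
        _ = q.length := q.length_edges
        _ = _ := hql
    have hxyV : (x : V) ≠ (y : V) := fun h => hxy (Subtype.ext h)
    have hyD1f : (y : V) ∈ D1f := by
      rw [← hcoeD1] at hy
      exact_mod_cast hy
    have hxD1f : (x : V) ∈ D1f := by
      rw [← hcoeD1] at hx
      exact_mod_cast hx
    set S' : Finset V := insert (vs 0) (D1f.erase ↑y) with hS'
    have hv0notD1f : vs 0 ∉ D1f := by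
      rw [hD1f]
      simp only [Finset.mem_insert, Finset.mem_singleton]
      push_neg
      exact ⟨hvne 0 1 (by decide), hvne 0 2 (by decide), hvne 0 3 (by decide),
        fun h => hv0i 0 h.symm⟩
    have hS'card : S'.card = 4 := by
      rw [hS', Finset.card_insert_of_notMem (fun h => hv0notD1f (Finset.mem_of_mem_erase h)),
        Finset.card_erase_of_mem hyD1f, hcard4]
    have hv0S' : v₀ ∈ S' := by
      rw [hS']
      exact Finset.mem_insert_of_mem (Finset.mem_erase.mpr ⟨Ne.symm hyv0, hv₀D1f⟩)
    have hS'le : steinerDist G (S' : Set V) ≤ srad G 4 :=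
      SteinerLemmas.steinerDist_le_srad hG hcard hv0S' (le_of_eq hS'card) hv₀
    obtain ⟨Hw, hw1, hw2, hw3⟩ := SteinerLemmas.exists_steiner_witness hG (S' : Set V)
    have hxS' : (x : V) ∈ S' := by
      rw [hS']
      exact Finset.mem_insert_of_mem (Finset.mem_erase.mpr ⟨hxyV, hxD1f⟩)
    have hshare : (Hw ⊓ q.toSubgraph).verts.Nonempty := by
      refine ⟨(x : V), ?_⟩
      rw [SimpleGraph.Subgraph.verts_inf]
      exact ⟨hw2 (by exact_mod_cast hxS'), by
        have := q.start_mem_verts_toSubgraph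
        simpa [hq] using this⟩
    have hconnU : (Hw ⊔ q.toSubgraph).Connected := SimpleGraph.Subgraph.connected_sup hw1.preconnected q.toSubgraph_connected.preconnected hshare
    have hrange : Set.range vs ⊆ (Hw ⊔ q.toSubgraph).verts := by
      rintro _ ⟨i, rfl⟩
      rw [SimpleGraph.Subgraph.verts_sup]
      by_cases hvy : vs i = (y : V)
      · right
        rw [hvy]
        have := q.end_mem_verts_toSubgraph
        simpa [hq] using this
      · left
        apply hw2
        show vs i ∈ (S' : Set V)
        rw [Finset.mem_coe, hS']
        rcases eq_or_ne i 0 with rfl | hi0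
        · exact Finset.mem_insert_self _ _
        · refine Finset.mem_insert_of_mem (Finset.mem_erase.mpr ⟨hvy, ?_⟩)
          rw [← Finset.mem_coe, hcoeD1]
          apply (hmemD1 _).mpr
          fin_cases i
          · exact absurd rfl hi0
          · tauto
          · tauto
          · tauto
    have hsd : sdiam G 4 ≤ (Hw ⊔ q.toSubgraph).edgeSet.ncard := by
      rw [← hD]
      exact SteinerLemmas.steinerDist_le_witness hconnU hrange
    have hcount : (Hw ⊔ q.toSubgraph).edgeSet.ncard
        ≤ steinerDist G (S' : Set V) + T1.coe.dist x y := by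
      rw [SimpleGraph.Subgraph.edgeSet_sup]
      calc (Hw.edgeSet ∪ q.toSubgraph.edgeSet).ncard
          ≤ Hw.edgeSet.ncard + q.toSubgraph.edgeSet.ncard := Set.ncard_union_le _ _
        _ ≤ steinerDist G (S' : Set V) + T1.coe.dist x y := by
            rw [hw3]; omega
    have hc1 : (sdiam G 4 : ℝ) ≤ (steinerDist G (S' : Set V) : ℝ) + (T1.coe.dist x y : ℝ) := by
      exact_mod_cast le_trans hsd hcount
    have hc2 : (steinerDist G (S' : Set V) : ℝ) ≤ (srad G 4 : ℝ) := by exact_mod_cast hS'le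
    linarith
  have hdistall : ∀ (x y : ↥T1.verts), (x : V) ∈ D1 → (y : V) ∈ D1 → x ≠ y →
      3 / 10 * (sdiam G 4 : ℝ) < (T1.coe.dist x y : ℝ) := by
    intro x y hx hy hxy
    by_cases hyv : (y : V) = v₀
    · have hxv : (x : V) ≠ v₀ := by
        intro h
        exact hxy (Subtype.ext (h.trans hyv.symm))
      have := hkey y x hy hx hxv (Ne.symm hxy)
      rwa [SimpleGraph.dist_comm] at this
    · exact hkey x y hx hy hyv hxy
  -- leaves are terminals
  have hsubL : subLeaves T1 ⊆ D1 :=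
    SteinerLemmas.leaves_subset_terminals ⟨hT1conn, hT1sub, hT1acy, hT1card⟩ ⟨v₀, hv₀D1⟩
  have hD1card : D1.ncard = 4 := by rw [← hcoeD1, Set.ncard_coe_finset, hcard4]
  have hle4 : (subLeaves T1).ncard ≤ 4 := by
    rw [← hD1card]
    exact Set.ncard_le_ncard hsubL (Set.toFinite _)
  have hmain : ¬ (subLeaves T1).ncard ≤ 3 := by
    intro hle3
    obtain ⟨tv, htvD1, htvL⟩ : ∃ tv ∈ D1, tv ∉ subLeaves T1 := by
      by_contra hcon
      push_neg at hcon
      have : D1 ⊆ subLeaves T1 := fun x hx => hcon x hx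
      have := Set.ncard_le_ncard this (Set.toFinite _)
      omega
    have happly : ∀ a b c : V, a ∈ D1 → b ∈ D1 → c ∈ D1 → a ≠ b → a ≠ c → b ≠ c →
        tv ≠ a → tv ≠ b → tv ≠ c →
        (∀ x, x ∈ D1 → x ≠ tv → (x = a ∨ x = b ∨ x = c)) → False := by
      intro a b c haD hbD hcD hab hac hbc hta htb htc hrest
      have haV : a ∈ T1.verts := hT1sub haD
      have hbV : b ∈ T1.verts := hT1sub hbD
      have hcV : c ∈ T1.verts := hT1sub hcD
      have htV : tv ∈ T1.verts := hT1sub htvD1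
      refine main_count (β := 3 / 10 * (sdiam G 4 : ℝ)) hc hT1acy
        (a := ⟨a, haV⟩) (b := ⟨b, hbV⟩) (c := ⟨c, hcV⟩) (t := ⟨tv, htV⟩)
        (fun h => hab (congrArg Subtype.val h))
        (fun h => hac (congrArg Subtype.val h))
        (fun h => hbc (congrArg Subtype.val h))
        (fun h => hta (congrArg Subtype.val h))
        (fun h => htb (congrArg Subtype.val h))
        (fun h => htc (congrArg Subtype.val h))
        ?_ ?_ ?_
      · intro x y hx hy hxy
        simp only [Set.mem_insert_iff, Set.mem_singleton_iff] at hx hy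
        apply hdistall
        · rcases hx with rfl | rfl | rfl | rfl
          exacts [haD, hbD, hcD, htvD1]
        · rcases hy with rfl | rfl | rfl | rfl
          exacts [haD, hbD, hcD, htvD1]
        · exact hxy
      · intro v hv
        have hvL : (v : V) ∈ subLeaves T1 := hleaftrans v hv
        have hvD1 : (v : V) ∈ D1 := hsubL hvL
        have hvt : (v : V) ≠ tv := fun h => htvL (h ▸ hvL)
        simp only [Set.mem_insert_iff, Set.mem_singleton_iff]
        rcases hrest _ hvD1 hvt with h | h | h
        · left; exact Subtype.ext h
        · right; left; exact Subtype.ext h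
        · right; right; exact Subtype.ext h
      · rw [hncard]
        rw [show (7:ℝ) / 3 * (3 / 10 * (sdiam G 4 : ℝ)) = 7 / 10 * (sdiam G 4 : ℝ) by ring]
        exact hmcast
    have h1 : vs 1 ∈ D1 := (hmemD1 _).mpr (by tauto)
    have h2 : vs 2 ∈ D1 := (hmemD1 _).mpr (by tauto)
    have h3 : vs 3 ∈ D1 := (hmemD1 _).mpr (by tauto)
    have h12 : vs 1 ≠ vs 2 := hvne 1 2 (by decide)
    have h13 : vs 1 ≠ vs 3 := hvne 1 3 (by decide)
    have h23 : vs 2 ≠ vs 3 := hvne 2 3 (by decide)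
    have h1v : vs 1 ≠ v₀ := fun h => hv0i 1 h.symm
    have h2v : vs 2 ≠ v₀ := fun h => hv0i 2 h.symm
    have h3v : vs 3 ≠ v₀ := fun h => hv0i 3 h.symm
    rcases (hmemD1 tv).mp htvD1 with rfl | rfl | rfl | rfl
    · exact happly (vs 2) (vs 3) v₀ h2 h3 hv₀D1 h23 h2v h3v h12 h13 h1v
        (fun x hx hxt => by rcases (hmemD1 x).mp hx with rfl | rfl | rfl | rfl <;> tauto)
    · exact happly (vs 1) (vs 3) v₀ h1 h3 hv₀D1 h13 h1v h3v (Ne.symm h12) h23 h2v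
        (fun x hx hxt => by rcases (hmemD1 x).mp hx with rfl | rfl | rfl | rfl <;> tauto)
    · exact happly (vs 1) (vs 2) v₀ h1 h2 hv₀D1 h12 h1v h2v (Ne.symm h13) (Ne.symm h23) h3v
        (fun x hx hxt => by rcases (hmemD1 x).mp hx with rfl | rfl | rfl | rfl <;> tauto)
    · exact happly (vs 1) (vs 2) (vs 3) h1 h2 h3 h12 h13 h23 (Ne.symm h1v) (Ne.symm h2v)
        (Ne.symm h3v)
        (fun x hx hxt => by rcases (hmemD1 x).mp hx with rfl | rfl | rfl | rfl <;> tauto)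
  refine ⟨by omega, by omega, hsubL⟩
end

section
/- For every tree T and integer k with 2 ≤ k ≤ |T|, sdiam_k(T) ≤ (k/(k−1))·srad_k(T). -/
section Aux

open SimpleGraph

variable {V : Type*}

lemma conn_del {G : SimpleGraph V} {v w : V} (hG : G.Connected)
    (hr : (G \ fromEdgeSet {s(v,w)}).Reachable v w) :
    (G \ fromEdgeSet {s(v,w)}).Connected := by
  rw [connected_iff]
  refine ⟨fun a b => ?_, hG.nonempty⟩
  obtain ⟨p⟩ := hG.preconnected a b
  induction p with
  | nil => exact Reachable.refl _
  | cons h p ih =>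
    rename_i x y _
    refine Reachable.trans ?_ ih
    by_cases he : s(x, y) = s(v, w)
    · rw [Sym2.eq_iff] at he
      rcases he with ⟨rfl, rfl⟩ | ⟨rfl, rfl⟩
      · exact hr
      · exact hr.symm
    · exact Adj.reachable
        (by simp only [sdiff_adj, fromEdgeSet_adj]; exact ⟨h, fun hc => he hc.1⟩)

lemma conn_card_le [Fintype V] (G : SimpleGraph V) (hG : G.Connected) :
    Fintype.card V ≤ G.edgeSet.ncard + 1 := by
  classical
  suffices key : ∀ n (G : SimpleGraph V), G.edgeSet.ncard = n → G.Connected →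
      Fintype.card V ≤ n + 1 from key _ G rfl hG
  intro n
  induction n using Nat.strong_induction_on with
  | _ n ih =>
    intro G hn hG
    by_cases ha : G.IsAcyclic
    · have ht : G.IsTree := ⟨hG, ha⟩
      haveI : Fintype G.edgeSet := (Set.toFinite _).fintype
      have h2 := ht.card_edgeFinset
      rw [← hn, Set.ncard_eq_toFinset_card' G.edgeSet]
      have e : G.edgeFinset = G.edgeSet.toFinset := by ext; simp
      rw [← h2, e]
    · simp only [IsAcyclic, not_forall, not_not] at ha
      obtain ⟨u, c, hc⟩ := ha
      have hne : c.edges ≠ [] := by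
        intro h0
        have := hc.three_le_length
        rw [← Walk.length_edges, h0] at this
        simp at this
      obtain ⟨e, he⟩ := List.exists_mem_of_ne_nil _ hne
      induction e with
      | _ x y =>
        have hr : (G \ fromEdgeSet {s(x,y)}).Reachable x y :=
          (adj_and_reachable_delete_edges_iff_exists_cycle.mpr ⟨u, c, hc, he⟩).2
        have hG' : (G \ fromEdgeSet {s(x,y)}).Connected := conn_del hG hr
        have hes : (G \ fromEdgeSet {s(x,y)}).edgeSet = G.edgeSet \ {s(x,y)} := by
          simp [edgeSet_sdiff, edgeSet_fromEdgeSet, edgeSet_sdiff_sdiff_isDiag]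
        have hmem : s(x,y) ∈ G.edgeSet := c.edges_subset_edgeSet he
        have hcard : (G \ fromEdgeSet {s(x,y)}).edgeSet.ncard = n - 1 := by
          rw [hes, Set.ncard_diff_singleton_of_mem hmem, hn]
        have hpos : 1 ≤ n := by
          rw [← hn]
          exact (Set.ncard_pos (Set.toFinite _)).mpr ⟨_, hmem⟩
        have := ih (n-1) (by omega) _ hcard hG'
        omega

lemma subgraph_edge_ncard_coe {G : SimpleGraph V} (H : G.Subgraph) :
    H.coe.edgeSet.ncard = H.edgeSet.ncard := by
  rw [← Subgraph.image_coe_edgeSet_coe]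
  exact (Set.ncard_image_of_injective _ (Sym2.map.injective Subtype.val_injective)).symm

lemma subgraph_verts_ncard_card {G : SimpleGraph V} (H : G.Subgraph) [Fintype H.verts] :
    H.verts.ncard = Fintype.card H.verts := by
  rw [Set.ncard_eq_toFinset_card', Set.toFinset_card]

lemma subgraph_conn_card_le [Fintype V] {G : SimpleGraph V} {H : G.Subgraph}
    (h : H.Connected) : H.verts.ncard ≤ H.edgeSet.ncard + 1 := by
  classical
  haveI : Fintype H.verts := (Set.toFinite _).fintype
  have := conn_card_le H.coe h
  rwa [subgraph_edge_ncard_coe, ← subgraph_verts_ncard_card] at this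

lemma subgraph_acyclic {G : SimpleGraph V} (H : G.Subgraph) (ha : G.IsAcyclic) :
    H.coe.IsAcyclic := by
  intro v c hc
  exact ha (c.map H.hom) (hc.map Subgraph.hom_injective)

lemma subgraph_tree_card [Fintype V] {G : SimpleGraph V} {H : G.Subgraph}
    (h : H.Connected) (ha : G.IsAcyclic) : H.edgeSet.ncard + 1 = H.verts.ncard := by
  classical
  haveI : Fintype H.verts := (Set.toFinite _).fintype
  haveI : Fintype H.coe.edgeSet := (Set.toFinite _).fintype
  have ht : H.coe.IsTree := ⟨h, subgraph_acyclic H ha⟩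
  have := ht.card_edgeFinset
  rw [subgraph_verts_ncard_card, ← this, ← subgraph_edge_ncard_coe,
    Set.ncard_eq_toFinset_card' H.coe.edgeSet]
  congr 2

section TreePaths

variable {T : SimpleGraph V} (hT : T.IsTree)

/-- The unique path between two vertices in a tree. -/
noncomputable def pth (a b : V) : T.Walk a b := (hT.existsUnique_path a b).choose

lemma pth_isPath (a b : V) : (pth hT a b).IsPath := (hT.existsUnique_path a b).choose_spec.1

lemma pth_unique {a b : V} (p : T.Walk a b) (hp : p.IsPath) : p = pth hT a b :=
  (hT.existsUnique_path a b).choose_spec.2 p hp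

lemma pth_support_subset_walk {a b : V} (w : T.Walk a b) :
    ∀ x ∈ (pth hT a b).support, x ∈ w.support := by
  classical
  intro x hx
  have h1 : (w.toPath : T.Walk a b) = pth hT a b := pth_unique hT _ w.toPath.2
  exact w.support_toPath_subset (h1 ▸ hx)

lemma pth_support_symm {a b : V} : ∀ x ∈ (pth hT a b).support, x ∈ (pth hT b a).support := by
  intro x hx
  have h1 : ((pth hT b a).reverse : T.Walk a b) = pth hT a b :=
    pth_unique hT _ ((pth_isPath hT b a).reverse)
  rw [← h1, Walk.support_reverse, List.mem_reverse] at hx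
  exact hx

lemma pth_tripod {a b : V} (c : V) :
    ∀ x ∈ (pth hT a b).support, x ∈ (pth hT c a).support ∨ x ∈ (pth hT c b).support := by
  intro x hx
  have hx' := pth_support_subset_walk hT ((pth hT c a).reverse.append (pth hT c b)) x hx
  rw [Walk.mem_support_append_iff, Walk.support_reverse, List.mem_reverse] at hx'
  exact hx'

/-- The vertex set of the minimal subtree spanning `A`. -/
def Wtree (A : Set V) : Set V := {x | ∃ a ∈ A, ∃ b ∈ A, x ∈ (pth hT a b).support}

lemma mem_Wtree_self {A : Set V} {a : V} (ha : a ∈ A) : a ∈ Wtree hT A :=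
  ⟨a, ha, a, ha, Walk.start_mem_support _⟩

lemma Wtree_mono {A B : Set V} (h : A ⊆ B) : Wtree hT A ⊆ Wtree hT B := by
  rintro x ⟨a, ha, b, hb, hx⟩
  exact ⟨a, h ha, b, h hb, hx⟩

lemma exists_subtree (a₀ : V) (A : Finset V) :
    ∃ H : T.Subgraph, H.Connected ∧
      H.verts = {a₀} ∪ ⋃ a ∈ A, {x | x ∈ (pth hT a₀ a).support} := by
  classical
  induction A using Finset.induction with
  | empty =>
    exact ⟨T.singletonSubgraph a₀, SimpleGraph.Subgraph.singletonSubgraph_connected, by simp⟩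
  | insert a A hnew ih =>
    obtain ⟨H, hc, hv⟩ := ih
    refine ⟨(pth hT a₀ a).toSubgraph ⊔ H, ?_, ?_⟩
    · refine SimpleGraph.Subgraph.connected_sup ((pth hT a₀ a).toSubgraph_connected).preconnected hc.preconnected ?_
      exact ⟨a₀, (pth hT a₀ a).start_mem_verts_toSubgraph, by rw [hv]; exact Or.inl rfl⟩
    · rw [SimpleGraph.Subgraph.verts_sup, hv, Walk.verts_toSubgraph]
      ext x
      simp only [Set.mem_union, Set.mem_setOf_eq, Set.mem_iUnion, Finset.mem_insert]
      constructor
      · rintro (h | (h | ⟨b, hb, h⟩))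
        · right; exact ⟨a, Or.inl rfl, h⟩
        · left; exact h
        · right; exact ⟨b, Or.inr hb, h⟩
      · rintro (h | ⟨b, (rfl | hb), h⟩)
        · right; left; exact h
        · left; exact h
        · right; right; exact ⟨b, hb, h⟩

end TreePaths

section TreeSteiner

variable {T : SimpleGraph V} (hT : T.IsTree)

lemma Wtree_eq (A : Finset V) {a₀ : V} (ha₀ : a₀ ∈ A) :
    Wtree hT ↑A = {a₀} ∪ ⋃ a ∈ A, {x | x ∈ (pth hT a₀ a).support} := by
  ext x
  simp only [Set.mem_union, Set.mem_iUnion, Set.mem_setOf_eq, Set.mem_singleton_iff]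
  constructor
  · rintro ⟨a, ha, b, hb, hx⟩
    rcases pth_tripod hT a₀ x hx with h | h
    · exact Or.inr ⟨a, ha, h⟩
    · exact Or.inr ⟨b, hb, h⟩
  · rintro (rfl | ⟨a, ha, h⟩)
    · exact mem_Wtree_self hT ha₀
    · exact ⟨a₀, ha₀, a, ha, h⟩

lemma exists_subtree' (A : Finset V) (hA : A.Nonempty) :
    ∃ H : T.Subgraph, H.Connected ∧ H.verts = Wtree hT ↑A := by
  obtain ⟨a₀, ha₀⟩ := hA
  obtain ⟨H, hc, hv⟩ := exists_subtree hT a₀ A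
  exact ⟨H, hc, by rw [hv, ← Wtree_eq hT A ha₀]⟩

lemma Wtree_subset (A : Finset V) : (↑A : Set V) ⊆ Wtree hT ↑A :=
  fun _ ha => mem_Wtree_self hT ha

lemma Wtree_subset_verts {A : Finset V} {H : T.Subgraph} (hc : H.Connected)
    (hsub : (↑A : Set V) ⊆ H.verts) : Wtree hT ↑A ⊆ H.verts := by
  rintro x ⟨a, ha, b, hb, hx⟩
  obtain ⟨w⟩ := hc.preconnected ⟨a, hsub ha⟩ ⟨b, hsub hb⟩
  have hx' := pth_support_subset_walk hT (w.map H.hom) x hx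
  rw [Walk.support_map, List.mem_map] at hx'
  obtain ⟨y, _, rfl⟩ := hx'
  exact y.2

lemma steinerDist_tree [Fintype V] (A : Finset V) (hA : A.Nonempty) :
    steinerDist T ↑A = (Wtree hT ↑A).ncard - 1 := by
  obtain ⟨H, hc, hv⟩ := exists_subtree' hT A hA
  have hedge : H.edgeSet.ncard + 1 = (Wtree hT ↑A).ncard := by
    rw [← hv]; exact subgraph_tree_card hc hT.2
  have hmem : (Wtree hT ↑A).ncard - 1 ∈
      {n | ∃ H : T.Subgraph, H.Connected ∧ ↑A ⊆ H.verts ∧ H.edgeSet.ncard = n} := by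
    refine ⟨H, hc, ?_, by omega⟩
    rw [hv]; exact Wtree_subset hT A
  refine le_antisymm (Nat.sInf_le hmem) (le_csInf ⟨_, hmem⟩ ?_)
  rintro n ⟨H', hc', hsub', rfl⟩
  have h1 : Wtree hT ↑A ⊆ H'.verts := Wtree_subset_verts hT hc' hsub'
  have h2 := subgraph_conn_card_le hc'
  have h3 : (Wtree hT ↑A).ncard ≤ H'.verts.ncard :=
    Set.ncard_le_ncard h1 (Set.toFinite _)
  omega

include hT in
lemma steinerDist_tree_mono [Fintype V] {A B : Finset V} (hA : A.Nonempty) (h : A ⊆ B) :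
    steinerDist T ↑A ≤ steinerDist T ↑B := by
  rw [steinerDist_tree hT A hA, steinerDist_tree hT B (hA.mono h)]
  have := Set.ncard_le_ncard (Wtree_mono hT (Finset.coe_subset.mpr h)) (Set.toFinite _)
  omega

include hT in
lemma steinerDist_tree_le_card [Fintype V] (A : Finset V) (hA : A.Nonempty) :
    steinerDist T ↑A ≤ Fintype.card V := by
  rw [steinerDist_tree hT A hA]
  have := Set.ncard_le_ncard (Set.subset_univ (Wtree hT ↑A)) (Set.toFinite _)
  simp only [Set.ncard_univ, Nat.card_eq_fintype_card] at this
  omega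

end TreeSteiner

lemma sum_ncard_le {α β : Type*} (S : Finset β) (f : β → Set α) (B : Set α) (hB : B.Finite)
    (hf : ∀ i ∈ S, f i ⊆ B)
    (hd : ∀ i ∈ S, ∀ j ∈ S, i ≠ j → f i ∩ f j = ∅) :
    ∑ i ∈ S, (f i).ncard ≤ B.ncard := by
  classical
  induction S using Finset.induction generalizing B with
  | empty => simp
  | insert i S hnew ih =>
    rw [Finset.sum_insert hnew]
    have h1 : ∀ j ∈ S, f j ⊆ B \ f i := by
      intro j hj x hx
      refine ⟨hf j (Finset.mem_insert_of_mem hj) hx, fun hxi => ?_⟩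
      have := hd i (Finset.mem_insert_self i S) j (Finset.mem_insert_of_mem hj)
        (fun h => hnew (h ▸ hj))
      exact Set.eq_empty_iff_forall_notMem.mp this x ⟨hxi, hx⟩
    have h2 := ih (B \ f i) hB.diff h1
      (fun a ha b hb hab => hd a (Finset.mem_insert_of_mem ha) b (Finset.mem_insert_of_mem hb) hab)
    have h3 : (B \ f i).ncard = B.ncard - (f i).ncard :=
      Set.ncard_diff (hf i (Finset.mem_insert_self i S)) (hB.subset (hf i (Finset.mem_insert_self i S)))
    have h4 : (f i).ncard ≤ B.ncard :=
      Set.ncard_le_ncard (hf i (Finset.mem_insert_self i S)) hB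
    omega

lemma key_lemma [Fintype V] [DecidableEq V] {T : SimpleGraph V} (hT : T.IsTree) (k : ℕ) (hk : 2 ≤ k)
    (S : Finset V) (hS : S.card = k) (v : V) :
    ∃ u ∈ S, (k - 1) * steinerDist T ↑S ≤ k * steinerDist T ↑(insert v (S.erase u)) := by
  classical
  set Sv : Finset V := insert v S with hSv
  set P : V → Set V := fun u => Wtree hT ↑Sv \ Wtree hT ↑(insert v (S.erase u)) with hP
  -- any element of Sv other than u is in insert v (S.erase u)
  have hmem' : ∀ u, ∀ w ∈ Sv, w ≠ u → w ∈ (↑(insert v (S.erase u)) : Set V) := by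
    intro u w hw hne
    rw [Finset.coe_insert, Set.mem_insert_iff]
    rw [hSv, Finset.mem_insert] at hw
    rcases hw with rfl | hw
    · exact Or.inl rfl
    · exact Or.inr (by rw [Finset.mem_coe, Finset.mem_erase]; exact ⟨hne, hw⟩)
  have hvmem : ∀ u, v ∈ (↑(insert v (S.erase u)) : Set V) := by
    intro u; simp
  -- disjointness of the P u
  have hdisj : ∀ u ∈ S, ∀ u' ∈ S, u ≠ u' → P u ∩ P u' = ∅ := by
    intro u hu u' hu' hne
    rw [Set.eq_empty_iff_forall_notMem]
    rintro x ⟨⟨hxW, hx1⟩, ⟨-, hx2⟩⟩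
    obtain ⟨a, ha, b, hb, hx⟩ := hxW
    have hau : a = u ∨ b = u := by
      by_contra hcon
      push_neg at hcon
      exact hx1 ⟨a, hmem' u a ha hcon.1, b, hmem' u b hb hcon.2, hx⟩
    have hau' : a = u' ∨ b = u' := by
      by_contra hcon
      push_neg at hcon
      exact hx2 ⟨a, hmem' u' a ha hcon.1, b, hmem' u' b hb hcon.2, hx⟩
    -- reduce to x on the path between u and u'
    have hxuu' : x ∈ (pth hT u u').support := by
      rcases hau with rfl | rfl
      · rcases hau' with rfl | rfl
        · exact absurd rfl hne
        · exact hx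
      · rcases hau' with rfl | rfl
        · exact pth_support_symm hT x hx
        · exact absurd rfl hne
    rcases pth_tripod hT v x hxuu' with h | h
    · -- x on path from v to u, contradicting x ∉ Wtree (insert v (S.erase u'))
      refine hx2 ⟨v, hvmem u', u, ?_, h⟩
      exact hmem' u' u (Finset.mem_insert_of_mem hu) hne
    · refine hx1 ⟨v, hvmem u, u', ?_, h⟩
      exact hmem' u u' (Finset.mem_insert_of_mem hu') (Ne.symm hne)
  -- each P u avoids v and lies in Wtree Sv
  have hPsub : ∀ u ∈ S, P u ⊆ Wtree hT ↑Sv \ {v} := by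
    intro u hu x hx
    refine ⟨hx.1, fun hxv => hx.2 ?_⟩
    rw [Set.mem_singleton_iff] at hxv
    rw [hxv]
    exact mem_Wtree_self hT (hvmem u)
  set a := (Wtree hT ↑Sv).ncard with ha
  have hva : v ∈ Wtree hT ↑Sv := mem_Wtree_self hT (by simp [hSv])
  have ha1 : 1 ≤ a := (Set.ncard_pos (Set.toFinite _)).mpr ⟨v, hva⟩
  have hsum : ∑ u ∈ S, (P u).ncard ≤ a - 1 := by
    have h1 := sum_ncard_le S P (Wtree hT ↑Sv \ {v}) (Set.toFinite _) hPsub hdisj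
    have h2 : (Wtree hT ↑Sv \ {v}).ncard = a - 1 :=
      Set.ncard_diff_singleton_of_mem hva
    omega
  -- pigeonhole
  have hpigeon : ∃ u ∈ S, k * (P u).ncard + 1 ≤ a := by
    by_contra hcon
    push_neg at hcon
    have h1 : ∀ u ∈ S, a ≤ k * (P u).ncard := fun u hu => by
      have := hcon u hu; omega
    have h2 : k * a ≤ ∑ u ∈ S, k * (P u).ncard := by
      calc k * a = ∑ _u ∈ S, a := by rw [Finset.sum_const, hS, smul_eq_mul]
      _ ≤ _ := Finset.sum_le_sum h1
    rw [← Finset.mul_sum] at h2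
    have h3 : k * (∑ u ∈ S, (P u).ncard) ≤ k * (a - 1) :=
      Nat.mul_le_mul_left k hsum
    have h4 : k * (a - 1) = k * a - k := by
      rw [Nat.mul_sub, mul_one]
    have h5 : k ≤ k * a := Nat.le_mul_of_pos_right k ha1
    set X := k * a
    set Y := k * (∑ u ∈ S, (P u).ncard)
    omega
  obtain ⟨u, hu, hp⟩ := hpigeon
  refine ⟨u, hu, ?_⟩
  have hSne : S.Nonempty := Finset.card_pos.mp (by omega)
  have hSune : (insert v (S.erase u)).Nonempty := Finset.insert_nonempty _ _
  rw [steinerDist_tree hT S hSne, steinerDist_tree hT _ hSune]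
  set b := (Wtree hT ↑(insert v (S.erase u))).ncard with hb
  set c := (Wtree hT ↑S).ncard with hc
  set p := (P u).ncard with hpn
  have hb1 : 1 ≤ b := (Set.ncard_pos (Set.toFinite _)).mpr
    ⟨v, mem_Wtree_self hT (hvmem u)⟩
  have hc1 : 1 ≤ c := by
    obtain ⟨s, hs⟩ := hSne
    exact (Set.ncard_pos (Set.toFinite _)).mpr ⟨s, mem_Wtree_self hT (by exact_mod_cast hs)⟩
  have hca : c ≤ a := Set.ncard_le_ncard
    (Wtree_mono hT (by simp only [hSv, Finset.coe_insert]; exact Set.subset_insert _ _))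
    (Set.toFinite _)
  have hab : a ≤ b + p := by
    have hsub : Wtree hT ↑Sv ⊆ Wtree hT ↑(insert v (S.erase u)) ∪ P u := by
      intro x hx
      by_cases hx2 : x ∈ Wtree hT ↑(insert v (S.erase u))
      · exact Or.inl hx2
      · exact Or.inr ⟨hx, hx2⟩
    calc a ≤ (Wtree hT ↑(insert v (S.erase u)) ∪ P u).ncard :=
          Set.ncard_le_ncard hsub (Set.toFinite _)
      _ ≤ b + p := Set.ncard_union_le _ _
  clear_value b c p a
  clear hb hc hpn ha hsum hdisj hPsub hva
  obtain ⟨k', rfl⟩ : ∃ k', k = k' + 2 := ⟨k - 2, by omega⟩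
  obtain ⟨b', rfl⟩ : ∃ b', b = b' + 1 := ⟨b - 1, by omega⟩
  obtain ⟨c', rfl⟩ : ∃ c', c = c' + 1 := ⟨c - 1, by omega⟩
  show (k' + 2 - 1) * (c' + 1 - 1) ≤ (k' + 2) * (b' + 1 - 1)
  have hgoal : (k' + 2 - 1) * (c' + 1 - 1) = (k' + 1) * c' := by norm_num
  rw [hgoal, Nat.add_sub_cancel]
  have H1 : (k' + 2) * a ≤ (k' + 2) * (b' + 1 + p) := Nat.mul_le_mul_left _ hab
  have H2 : (k' + 1) * (c' + 1) ≤ (k' + 1) * a := Nat.mul_le_mul_left _ hca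
  nlinarith [H1, H2, hp]

end Aux
theorem tree_sdiam_le {V : Type*} [Fintype V] (T : SimpleGraph V) (hT : T.IsTree)
    (k : ℕ) (hk : 2 ≤ k) (hcard : k ≤ Fintype.card V) :
    (sdiam T k : ℝ) ≤ (k : ℝ) / (k - 1) * srad T k := by
  classical
  have hne : Nonempty V := Fintype.card_pos_iff.mp (by omega)
  set M : V → Set ℕ :=
    fun v => {n | ∃ S : Finset V, v ∈ S ∧ S.card = k ∧ steinerDist T (S : Set V) = n} with hM
  have hMub : ∀ v, ∀ n ∈ M v, n ≤ Fintype.card V := by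
    rintro v n ⟨S, hvS, hcard', rfl⟩
    exact steinerDist_tree_le_card hT S ⟨v, hvS⟩
  have hMbdd : ∀ v, BddAbove (M v) := fun v => ⟨Fintype.card V, hMub v⟩
  have hMne : ∀ v, (M v).Nonempty := by
    intro v
    obtain ⟨S, hsub, -, hcard'⟩ := Finset.exists_subsuperset_card_eq (n := k)
      (Finset.subset_univ {v}) (by rw [Finset.card_singleton]; omega) (by rw [Finset.card_univ]; exact hcard)
    exact ⟨_, S, hsub (Finset.mem_singleton_self v), hcard', rfl⟩
  have hEcc_le : ∀ v, steinerEcc T k v ≤ Fintype.card V :=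
    fun v => csSup_le (hMne v) (hMub v)
  -- the radius is attained at some vertex v₀
  have hrange_ne : (Set.range (steinerEcc T k)).Nonempty := Set.range_nonempty _
  obtain ⟨v₀, hv₀⟩ : ∃ v₀, steinerEcc T k v₀ = srad T k := by
    have := Nat.sInf_mem hrange_ne
    exact this
  -- the diameter is attained at some vertex v₁ and then some set S₀
  obtain ⟨v₁, hv₁⟩ : ∃ v₁, steinerEcc T k v₁ = sdiam T k := by
    have := Nat.sSup_mem hrange_ne ⟨Fintype.card V, by rintro n ⟨v, rfl⟩; exact hEcc_le v⟩
    exact this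
  obtain ⟨S₀, hvS₀, hS₀card, hS₀d⟩ : ∃ S₀ : Finset V, v₁ ∈ S₀ ∧ S₀.card = k ∧
      steinerDist T (S₀ : Set V) = sdiam T k := by
    have := Nat.sSup_mem (hMne v₁) (hMbdd v₁)
    obtain ⟨S₀, h1, h2, h3⟩ := this
    exact ⟨S₀, h1, h2, by rw [h3]; exact hv₁⟩
  -- apply the key lemma
  obtain ⟨u, hu, hkey⟩ := key_lemma hT k hk S₀ hS₀card v₀
  -- extend insert v₀ (S₀.erase u) to a k-set
  set S' : Finset V := insert v₀ (S₀.erase u) with hS'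
  have hS'card : S'.card ≤ k := by
    have h1 : (S₀.erase u).card = k - 1 := by rw [Finset.card_erase_of_mem hu, hS₀card]
    have h2 : S'.card ≤ (S₀.erase u).card + 1 := Finset.card_insert_le _ _
    omega
  obtain ⟨S'', hsub'', -, hS''card⟩ := Finset.exists_subsuperset_card_eq (n := k)
    (Finset.subset_univ S') hS'card (by simpa using hcard)
  have hv₀S'' : v₀ ∈ S'' := hsub'' (Finset.mem_insert_self _ _)
  have hmono : steinerDist T (S' : Set V) ≤ steinerDist T (S'' : Set V) :=
    steinerDist_tree_mono hT (Finset.insert_nonempty _ _) hsub''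
  have hle_srad : steinerDist T (S'' : Set V) ≤ srad T k := by
    rw [← hv₀]
    exact le_csSup (hMbdd v₀) ⟨S'', hv₀S'', hS''card, rfl⟩
  have hfin : (k - 1) * sdiam T k ≤ k * srad T k := by
    calc (k - 1) * sdiam T k = (k - 1) * steinerDist T (S₀ : Set V) := by rw [hS₀d]
      _ ≤ k * steinerDist T (S' : Set V) := hkey
      _ ≤ k * steinerDist T (S'' : Set V) := Nat.mul_le_mul_left _ hmono
      _ ≤ k * srad T k := Nat.mul_le_mul_left _ hle_srad
  -- cast to the reals
  have hkR : (0 : ℝ) < (k : ℝ) - 1 := by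
    have : (2 : ℝ) ≤ (k : ℝ) := by exact_mod_cast hk
    linarith
  rw [div_mul_eq_mul_div, le_div_iff₀ hkR]
  have hcast : (((k - 1) * sdiam T k : ℕ) : ℝ) ≤ ((k * srad T k : ℕ) : ℝ) := by
    exact_mod_cast hfin
  push_cast [Nat.cast_sub (show 1 ≤ k by omega)] at hcast
  linarith
end
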